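/- arXiv:2308.03677 — 3 statements merged into one kernel-verified Lean document; each statement's English description precedes it below -/
import Mathlib

section
/- In any open generalized n-gon M, for every finite subset A there do not exist three pairwise disjoint subsets B₁, B₂, B₃ of M, each closed over A and each neighbouring A (i.e., every vertex of A has a neighbour in B_i ∖ A). -/
open SimpleGraph

universe u

namespace GenPolygon

variable {V : Type u}

/-- A graph is bipartite if it admits a proper 2-colouring. -/
def IsBipartite (G : SimpleGraph V) : Prop :=
  ∃ c : V → Bool, ∀ ⦃x y⦄, G.Adj x y → c x ≠ c y

/-- A weak generalized n-gon: bipartite, diameter n, girth 2n. -/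
def IsWeakGenGon (n : ℕ) (G : SimpleGraph V) : Prop :=
  IsBipartite G ∧ G.ediam = (n : ℕ∞) ∧ G.egirth = (2 * n : ℕ∞)

/-- Thick: every vertex has at least 3 neighbours. -/
def Thick (G : SimpleGraph V) : Prop :=
  ∀ v : V, 3 ≤ (G.neighborSet v).ncard

/-- A generalized n-gon: a thick weak generalized n-gon. -/
def IsGenGon (n : ℕ) (G : SimpleGraph V) : Prop :=
  IsWeakGenGon n G ∧ Thick G

/-- A partial n-gon: connected bipartite graph of girth at least 2n. -/
def IsPartialGon (n : ℕ) (G : SimpleGraph V) : Prop :=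
  G.Connected ∧ IsBipartite G ∧ (2 * n : ℕ∞) ≤ G.egirth

/-- Valency of `v` inside the vertex set `A`. -/
noncomputable def degIn (G : SimpleGraph V) (A : Set V) (v : V) : ℕ :=
  (G.neighborSet v ∩ A).ncard

/-- Distance between `x` and `y` computed inside the induced subgraph on `S`. -/
noncomputable def edistIn (G : SimpleGraph V) (S : Set V) (x y : V) : ℕ∞ :=
  ⨅ p : {p : G.Walk x y // ∀ v ∈ p.support, v ∈ S}, ((p : G.Walk x y).length : ℕ∞)

/-- `γ` is the interior of a clean arc inside `S` joining `x` and `y`: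
a path of length `n-1` whose `n-2` interior vertices all have valency 2 in `S`. -/
def IsCleanArcIn (n : ℕ) (G : SimpleGraph V) (S : Set V) (x y : V) (γ : Set V) : Prop :=
  ∃ p : G.Walk x y, p.IsPath ∧ p.length = n - 1 ∧ (∀ v ∈ p.support, v ∈ S) ∧
    γ = {v | v ∈ p.support ∧ v ≠ x ∧ v ≠ y} ∧ ∀ v ∈ γ, degIn G S v = 2

/-- The finite subgraph on `A` has a loose end (vertex of valency ≤ 1 in `A`). -/
def HasLooseEnd (G : SimpleGraph V) (A : Set V) : Prop :=
  ∃ v ∈ A, degIn G A v ≤ 1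

/-- The subgraph on `A` contains a clean arch. -/
def HasCleanArch (n : ℕ) (G : SimpleGraph V) (A : Set V) : Prop :=
  ∃ x y γ, x ∈ A ∧ y ∈ A ∧ γ.Nonempty ∧ IsCleanArcIn n G A x y γ

/-- The subgraph on `B` is open: every finite nonempty subgraph has a loose end
or a clean arch. -/
def IsOpenSet (n : ℕ) (G : SimpleGraph V) (B : Set V) : Prop :=
  ∀ A ⊆ B, A.Finite → A.Nonempty → HasLooseEnd G A ∨ HasCleanArch n G A

/-- An open graph (e.g. an open generalized n-gon). -/
def IsOpenGraph (n : ℕ) (G : SimpleGraph V) : Prop :=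
  IsOpenSet n G Set.univ

/-- `B` is closed over `A`: `B ∩ A = ∅` and `B` contains neither a loose end
nor (the interior of) a clean arc with endpoints in `A ∪ B`. -/
def ClosedOver (n : ℕ) (G : SimpleGraph V) (A B : Set V) : Prop :=
  Disjoint A B ∧ B.Nonempty ∧
  (∀ v ∈ B, 2 ≤ degIn G (A ∪ B) v) ∧
  ¬ ∃ x y γ, x ∈ A ∪ B ∧ y ∈ A ∪ B ∧ γ ⊆ B ∧ γ.Nonempty ∧
      IsCleanArcIn n G (A ∪ B) x y γ

/-- `B` is open over `A`: no finite subset of `B \ A` is closed over `A`. -/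
def OpenOver (n : ℕ) (G : SimpleGraph V) (A B : Set V) : Prop :=
  ∀ D ⊆ B \ A, D.Finite → ¬ ClosedOver n G A D

/-- `A ≤ₒ B`: `A ⊆ B` and `B` is open over `A`. -/
def StrongleO (n : ℕ) (G : SimpleGraph V) (A B : Set V) : Prop :=
  A ⊆ B ∧ ∀ D ⊆ B \ A, D.Finite → ¬ ClosedOver n G A D

/-- `B` neighbours `A`: every vertex of `A` has a neighbour in `B \ A`. -/
def Neighbours (G : SimpleGraph V) (A B : Set V) : Prop :=
  ∀ a ∈ A, ∃ b ∈ B \ A, G.Adj a b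

/-- Edges of `G` lying inside the vertex set `A`. -/
def edgesIn (G : SimpleGraph V) (A : Set V) : Set (Sym2 V) :=
  {e ∈ G.edgeSet | ∀ v ∈ e, v ∈ A}

/-- Edges of `G` with one endpoint in `A` and one in `B`. -/
def crossEdges (G : SimpleGraph V) (A B : Set V) : Set (Sym2 V) :=
  {e ∈ G.edgeSet | ∃ x ∈ A, ∃ y ∈ B, e = s(x, y)}

/-- The rank function δₙ(A) = (n-1)|V(A)| - (n-2)|E(A)| (for finite `A`). -/
noncomputable def delta (n : ℕ) (G : SimpleGraph V) (A : Set V) : ℤ :=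
  ((n : ℤ) - 1) * (A.ncard : ℤ) - ((n : ℤ) - 2) * ((edgesIn G A).ncard : ℤ)

/-- `A` is n-strong in `B`: δₙ(X) ≥ δₙ(X ∩ A) for all finite X ⊆ B. -/
def NStrong (n : ℕ) (G : SimpleGraph V) (A B : Set V) : Prop :=
  A ⊆ B ∧ ∀ X ⊆ B, X.Finite → delta n G (X ∩ A) ≤ delta n G X

/-- `γ` is a clean arc freshly attached to `S` between `x, y ∈ S` at distance n+1. -/
def AttachedCleanArc (n : ℕ) (G : SimpleGraph V) (S : Set V) (x y : V) (γ : Set V) : Prop :=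
  x ∈ S ∧ y ∈ S ∧ edistIn G S x y = ((n : ℕ∞) + 1) ∧ Disjoint S γ ∧
  IsCleanArcIn n G (S ∪ γ) x y γ

/-- One step of the free completion: add a clean arc between every pair of
vertices at distance n+1, and nothing else. -/
def FreeStep (n : ℕ) (G : SimpleGraph V) (S T : Set V) : Prop :=
  S ⊆ T ∧
  (∀ x y, x ∈ S → y ∈ S → edistIn G S x y = ((n : ℕ∞) + 1) →
    ∃ γ ⊆ T, AttachedCleanArc n G S x y γ) ∧
  (∀ v ∈ T \ S, ∃ x y γ, v ∈ γ ∧ γ ⊆ T ∧ AttachedCleanArc n G S x y γ)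

/-- `Γ` is the chain of a free n-completion (of `Γ 0`) inside the ambient graph `G`. -/
def IsFreeCompletionChain (n : ℕ) (G : SimpleGraph V) (Γ : ℕ → Set V) : Prop :=
  ∀ i, FreeStep n G (Γ i) (Γ (i + 1))

/-- The sub-n-gon generated by `A`: intersection of all generalized sub-n-gons
of `G` containing `A`. -/
def genSubGon (n : ℕ) (G : SimpleGraph V) (A : Set V) : Set V :=
  ⋂₀ {S : Set V | A ⊆ S ∧ IsGenGon n (G.induce S)}

/-- Hyper-free minimal extension: add a loose end or a clean arc between two
vertices at distance n+1. -/
def HFMinExt (n : ℕ) (G : SimpleGraph V) (S T : Set V) : Prop :=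
  S ⊆ T ∧
  ((∃ v, v ∉ S ∧ T = insert v S ∧ degIn G T v ≤ 1) ∨
   (∃ x y, AttachedCleanArc n G S x y (T \ S)))

/-- Extension by a single clean arc. -/
def CleanArcStep (n : ℕ) (G : SimpleGraph V) (S T : Set V) : Prop :=
  S ⊆ T ∧ ∃ x y, AttachedCleanArc n G S x y (T \ S)

/-- `H` is a hat-rack of length `k`: a simple path `x₀, …, x_k` together with,
for each interior index `1 ≤ i ≤ k-1`, a set of extra neighbours of `xᵢ`. -/
def IsHatRack (n k : ℕ) (G : SimpleGraph V) (H : Set V) : Prop :=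
  ∃ x : Fin (k + 1) → V, Function.Injective x ∧
    (∀ i : Fin k, G.Adj (x i.castSucc) (x i.succ)) ∧
    (∀ i, x i ∈ H) ∧
    ∀ v ∈ H, (∀ i, v ≠ x i) →
      ∃ i : Fin (k + 1), 1 ≤ (i : ℕ) ∧ (i : ℕ) ≤ k - 1 ∧ G.neighborSet v ∩ H = {x i}

end GenPolygon
namespace GenPolygon

variable {V : Type u}

lemma degIn_mono (G : SimpleGraph V) {S T : Set V} (h : S ⊆ T) (hT : T.Finite) (v : V) :
    degIn G S v ≤ degIn G T v :=
  Set.ncard_le_ncard (Set.inter_subset_inter_right _ h) (hT.subset Set.inter_subset_right)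

lemma nbhd_eq_aux {G : SimpleGraph V} {A B S : Set V} (hS : S.Finite)
    (hABS : A ∪ B ⊆ S) {v : V} (h2 : degIn G S v = 2)
    (hge : 2 ≤ degIn G (A ∪ B) v) :
    G.neighborSet v ∩ (A ∪ B) = G.neighborSet v ∩ S := by
  exact Set.eq_of_subset_of_ncard_le (Set.inter_subset_inter_right _ hABS)
    (by rw [show (G.neighborSet v ∩ S).ncard = degIn G S v from rfl, h2]; exact hge)
    (hS.subset Set.inter_subset_right)

lemma walk_prop {G : SimpleGraph V} {A B S γ : Set V} {y : V}
    (hγB : ∀ u ∈ γ, u ∈ A ∪ B → u ∈ B)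
    (hkey : ∀ w ∈ γ, w ∈ B → ∀ u, G.Adj w u → u ∈ S → u ∈ A ∪ B) :
    ∀ {a : V} (q : G.Walk a y), q.IsPath → (∀ w ∈ q.support, w ∈ S) →
      (∀ w ∈ q.support, w ≠ y → w ∈ γ) → a ∈ B →
      ∀ w ∈ q.support, w ∈ A ∪ B := by
  intro a q
  induction q with
  | nil =>
    intro _ _ _ haB w hw
    simp only [SimpleGraph.Walk.support_nil, List.mem_singleton] at hw
    subst hw; exact Or.inr haB
  | @cons a c y' hadj q ih =>
    intro hp hS hγ haB w hw
    have hpq : q.IsPath ∧ a ∉ q.support := (SimpleGraph.Walk.cons_isPath_iff _ _).mp hp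
    have hay : a ≠ y' := by
      rintro rfl
      exact hpq.2 q.end_mem_support
    have haγ : a ∈ γ := hγ a (SimpleGraph.Walk.start_mem_support _) hay
    have hcS : c ∈ S := hS c (by
      simp only [SimpleGraph.Walk.support_cons, List.mem_cons]
      exact Or.inr q.start_mem_support)
    have hcAB : c ∈ A ∪ B := hkey a haγ haB c hadj hcS
    simp only [SimpleGraph.Walk.support_cons, List.mem_cons] at hw
    rcases hw with rfl | hw
    · exact Or.inr haB
    by_cases hcy : c = y'
    · subst hcy
      have : q = SimpleGraph.Walk.nil := SimpleGraph.Walk.isPath_iff_eq_nil.mp hpq.1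
      subst this
      simp only [SimpleGraph.Walk.support_nil, List.mem_singleton] at hw
      subst hw; exact hcAB
    · have hcγ : c ∈ γ := hγ c (by
        simp only [SimpleGraph.Walk.support_cons, List.mem_cons]
        exact Or.inr q.start_mem_support) hcy
      have hcB : c ∈ B := hγB c hcγ hcAB
      exact ih hpq.1 (fun u hu => hS u (by
          simp only [SimpleGraph.Walk.support_cons, List.mem_cons]; exact Or.inr hu))
        (fun u hu huy => hγ u (by
          simp only [SimpleGraph.Walk.support_cons, List.mem_cons]; exact Or.inr hu) huy)
        hcB w hw

lemma closed_no_arc {n : ℕ} {G : SimpleGraph V} {A B S : Set V} (hS : S.Finite)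
    (hABS : A ∪ B ⊆ S)
    (hA3 : ∀ a ∈ A, 3 ≤ degIn G S a)
    (hcl : ClosedOver n G A B)
    {x y : V} {γ : Set V} (hγne : γ.Nonempty)
    (harc : IsCleanArcIn n G S x y γ)
    {v : V} (hvγ : v ∈ γ) (hvB : v ∈ B) : False := by
  classical
  obtain ⟨p, hp, hlen, hsupS, hγeq, hdeg2⟩ := harc
  have hγA : ∀ w ∈ γ, w ∉ A := by
    intro w hw hwA
    have h1 := hA3 w hwA
    have h2 := hdeg2 w hw
    omega
  have hγB : ∀ u ∈ γ, u ∈ A ∪ B → u ∈ B := fun u hu h => h.resolve_left (hγA u hu)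
  have hkey : ∀ w ∈ γ, w ∈ B → ∀ u, G.Adj w u → u ∈ S → u ∈ A ∪ B := by
    intro w hw hwB u hadj huS
    have heq := nbhd_eq_aux hS hABS (hdeg2 w hw) (hcl.2.2.1 w hwB)
    have hu : u ∈ G.neighborSet w ∩ S := ⟨hadj, huS⟩
    rw [← heq] at hu
    exact hu.2
  have hv' := hvγ
  rw [hγeq] at hv'
  obtain ⟨hvsup, hvx, hvy⟩ := hv'
  set t := p.takeUntil v hvsup with ht
  set d := p.dropUntil v hvsup with hd
  have hspec := p.take_spec hvsup
  have hsupp_eq : p.support = t.support ++ d.support.tail := by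
    rw [← hspec, SimpleGraph.Walk.support_append]
  have hnd : (t.support ++ d.support.tail).Nodup := by
    rw [← hsupp_eq]; exact hp.support_nodup
  have hdisj := List.disjoint_of_nodup_append hnd
  have hxd : x ∉ d.support.tail := fun h => hdisj t.start_mem_support h
  have hyt : y ∉ t.support := by
    intro h
    have hyd : y ∈ d.support := d.end_mem_support
    rw [d.support_eq_cons] at hyd
    rcases hyd with _ | hyd
    · exact hvy rfl
    · exact hdisj h (by assumption)
  have hd_path : d.IsPath := hp.dropUntil _
  have hd_S : ∀ w ∈ d.support, w ∈ S := fun w hw =>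
    hsupS w (p.support_dropUntil_subset hvsup hw)
  have hd_γ : ∀ w ∈ d.support, w ≠ y → w ∈ γ := by
    intro w hw hwy
    rw [hγeq]
    refine ⟨p.support_dropUntil_subset hvsup hw, ?_, hwy⟩
    rintro rfl
    rw [d.support_eq_cons] at hw
    rcases hw with _ | hw
    · exact hvx rfl
    · exact hxd (by assumption)
  have hdAB : ∀ w ∈ d.support, w ∈ A ∪ B :=
    walk_prop hγB hkey d hd_path hd_S hd_γ hvB
  have ht_path : t.reverse.IsPath := (hp.takeUntil _).reverse
  have htrev : ∀ w, w ∈ t.reverse.support ↔ w ∈ t.support := by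
    intro w; rw [SimpleGraph.Walk.support_reverse, List.mem_reverse]
  have ht_S : ∀ w ∈ t.reverse.support, w ∈ S := fun w hw =>
    hsupS w (p.support_takeUntil_subset hvsup ((htrev w).mp hw))
  have ht_γ : ∀ w ∈ t.reverse.support, w ≠ x → w ∈ γ := by
    intro w hw hwx
    rw [hγeq]
    refine ⟨p.support_takeUntil_subset hvsup ((htrev w).mp hw), hwx, ?_⟩
    rintro rfl
    exact hyt ((htrev _).mp hw)
  have htAB : ∀ w ∈ t.reverse.support, w ∈ A ∪ B :=
    walk_prop hγB hkey t.reverse ht_path ht_S ht_γ hvB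
  have hpAB : ∀ w ∈ p.support, w ∈ A ∪ B := by
    intro w hw
    rw [hsupp_eq] at hw
    rcases List.mem_append.mp hw with h | h
    · exact htAB w ((htrev w).mpr h)
    · exact hdAB w (List.mem_of_mem_tail h)
  have hγsubB : γ ⊆ B := by
    intro w hw
    have hw' := hw
    rw [hγeq] at hw'
    exact hγB w hw (hpAB w hw'.1)
  have hdeg2' : ∀ w ∈ γ, degIn G (A ∪ B) w = 2 := by
    intro w hw
    have heq := nbhd_eq_aux hS hABS (hdeg2 w hw) (hcl.2.2.1 w (hγsubB hw))
    show (G.neighborSet w ∩ (A ∪ B)).ncard = 2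
    rw [heq]
    exact hdeg2 w hw
  exact hcl.2.2.2 ⟨x, y, γ, hpAB x p.start_mem_support, hpAB y p.end_mem_support,
    hγsubB, hγne, p, hp, hlen, hpAB, hγeq, hdeg2'⟩

end GenPolygon

/-- In an open generalized n-gon there are no three pairwise
disjoint finite sets, each closed over a finite set A and neighbouring A. -/
theorem no_three_disjoint_closed_sets {n : ℕ} (hn : 3 ≤ n) {V : Type u}
    (G : SimpleGraph V) (hgon : GenPolygon.IsGenGon n G)
    (hopen : GenPolygon.IsOpenGraph n G)
    (A : Set V) (hA : A.Finite) (B₁ B₂ B₃ : Set V)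
    (hf₁ : B₁.Finite) (hf₂ : B₂.Finite) (hf₃ : B₃.Finite)
    (hc₁ : GenPolygon.ClosedOver n G A B₁) (hc₂ : GenPolygon.ClosedOver n G A B₂)
    (hc₃ : GenPolygon.ClosedOver n G A B₃)
    (hn₁ : GenPolygon.Neighbours G A B₁) (hn₂ : GenPolygon.Neighbours G A B₂)
    (hn₃ : GenPolygon.Neighbours G A B₃)
    (h₁₂ : Disjoint B₁ B₂) (h₁₃ : Disjoint B₁ B₃) (h₂₃ : Disjoint B₂ B₃) :
    False := by
  classical
  set S : Set V := A ∪ B₁ ∪ B₂ ∪ B₃ with hSdef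
  have hAS : A ⊆ S := fun w h => Or.inl (Or.inl (Or.inl h))
  have hB1S : B₁ ⊆ S := fun w h => Or.inl (Or.inl (Or.inr h))
  have hB2S : B₂ ⊆ S := fun w h => Or.inl (Or.inr h)
  have hB3S : B₃ ⊆ S := fun w h => Or.inr h
  have hSfin : S.Finite := ((hA.union hf₁).union hf₂).union hf₃
  have hSne : S.Nonempty := by
    obtain ⟨b, hb⟩ := hc₁.2.1
    exact ⟨b, hB1S hb⟩
  have hA3 : ∀ a ∈ A, 3 ≤ GenPolygon.degIn G S a := by
    intro a ha
    obtain ⟨b₁, hb₁, hadj₁⟩ := hn₁ a ha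
    obtain ⟨b₂, hb₂, hadj₂⟩ := hn₂ a ha
    obtain ⟨b₃, hb₃, hadj₃⟩ := hn₃ a ha
    have h12 : b₁ ≠ b₂ := fun h => (Set.disjoint_left.mp h₁₂ hb₁.1) (h ▸ hb₂.1)
    have h13 : b₁ ≠ b₃ := fun h => (Set.disjoint_left.mp h₁₃ hb₁.1) (h ▸ hb₃.1)
    have h23 : b₂ ≠ b₃ := fun h => (Set.disjoint_left.mp h₂₃ hb₂.1) (h ▸ hb₃.1)
    have hsub : ({b₁, b₂, b₃} : Set V) ⊆ G.neighborSet a ∩ S := by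
      rintro w (rfl | rfl | rfl)
      · exact ⟨hadj₁, hB1S hb₁.1⟩
      · exact ⟨hadj₂, hB2S hb₂.1⟩
      · exact ⟨hadj₃, hB3S hb₃.1⟩
    have hcard : ({b₁, b₂, b₃} : Set V).ncard = 3 := by
      rw [Set.ncard_insert_of_notMem (by simp [h12, h13]),
        Set.ncard_pair h23]
    calc (3 : ℕ) = ({b₁, b₂, b₃} : Set V).ncard := hcard.symm
      _ ≤ (G.neighborSet a ∩ S).ncard :=
          Set.ncard_le_ncard hsub (hSfin.subset Set.inter_subset_right)
  have hAB1S : A ∪ B₁ ⊆ S := Set.union_subset hAS hB1S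
  have hAB2S : A ∪ B₂ ⊆ S := Set.union_subset hAS hB2S
  have hAB3S : A ∪ B₃ ⊆ S := Set.union_subset hAS hB3S
  rcases hopen S (Set.subset_univ S) hSfin hSne with hle | harch
  · obtain ⟨v, hvS, hdeg⟩ := hle
    rcases hvS with ((hvA | hv1) | hv2) | hv3
    · have := hA3 v hvA; omega
    · have h2 := hc₁.2.2.1 v hv1
      have := GenPolygon.degIn_mono G hAB1S hSfin v
      omega
    · have h2 := hc₂.2.2.1 v hv2
      have := GenPolygon.degIn_mono G hAB2S hSfin v
      omega
    · have h2 := hc₃.2.2.1 v hv3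
      have := GenPolygon.degIn_mono G hAB3S hSfin v
      omega
  · obtain ⟨x, y, γ, hxS, hyS, hγne, harc⟩ := harch
    obtain ⟨p, hp, hlen, hsup, hγeq, hdeg2⟩ := harc
    obtain ⟨v, hvγ⟩ := hγne
    have hvS : v ∈ S := hsup v (by rw [hγeq] at hvγ; exact hvγ.1)
    have hvA : v ∉ A := by
      intro h
      have := hA3 v h
      have := hdeg2 v hvγ
      omega
    have harc' : GenPolygon.IsCleanArcIn n G S x y γ := ⟨p, hp, hlen, hsup, hγeq, hdeg2⟩
    rcases hvS with ((hvA' | hv1) | hv2) | hv3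
    · exact hvA hvA'
    · exact GenPolygon.closed_no_arc hSfin hAB1S hA3 hc₁ ⟨v, hvγ⟩ harc' hvγ hv1
    · exact GenPolygon.closed_no_arc hSfin hAB2S hA3 hc₂ ⟨v, hvγ⟩ harc' hvγ hv2
    · exact GenPolygon.closed_no_arc hSfin hAB3S hA3 hc₃ ⟨v, hvγ⟩ harc' hvγ hv3
end

section
/- In any open generalized n-gon M, if a finite set B is closed over a finite set A, then B is algebraic over A: the orbit of B under automorphisms of M fixing A pointwise is finite (indeed B has at most finitely many disjoint conjugates over A). -/
open SimpleGraph

universe u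

section ClosedAlgebraicHelpers

open GenPolygon SimpleGraph

variable {V : Type u} {G : SimpleGraph V}

lemma GenPolygon.degIn_def (G : SimpleGraph V) (A : Set V) (v : V) :
    degIn G A v = (G.neighborSet v ∩ A).ncard := rfl

lemma GenPolygon.neighborSet_inter_image (f : G ≃g G) (S : Set V) (v : V) :
    G.neighborSet (f v) ∩ (⇑f '' S) = ⇑f '' (G.neighborSet v ∩ S) := by
  ext w
  constructor
  · rintro ⟨hadj, u, huS, rfl⟩
    exact ⟨u, ⟨f.map_adj_iff.mp hadj, huS⟩, rfl⟩
  · rintro ⟨u, ⟨hadj, huS⟩, rfl⟩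
    exact ⟨f.map_adj_iff.mpr hadj, u, huS, rfl⟩

lemma GenPolygon.degIn_image (f : G ≃g G) (S : Set V) (v : V) :
    degIn G (⇑f '' S) (f v) = degIn G S v := by
  rw [degIn_def, degIn_def, GenPolygon.neighborSet_inter_image,
    Set.ncard_image_of_injective _ f.injective]

lemma GenPolygon.IsCleanArcIn.image {n : ℕ} (f : G ≃g G) {S γ : Set V} {x y : V}
    (h : IsCleanArcIn n G S x y γ) :
    IsCleanArcIn n G (⇑f '' S) (f x) (f y) (⇑f '' γ) := by
  obtain ⟨p, hp, hlen, hsupp, hγ, hdeg⟩ := h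
  have hcoe : ⇑f.toHom = ⇑f := rfl
  refine ⟨p.map f.toHom, Walk.map_isPath_of_injective (by rw [hcoe]; exact f.injective) hp,
    by rw [Walk.length_map, hlen], ?_, ?_, ?_⟩
  · intro v hv
    rw [Walk.support_map, hcoe, List.mem_map] at hv
    obtain ⟨u, hu, rfl⟩ := hv
    exact ⟨u, hsupp u hu, rfl⟩
  · ext w
    simp only [Set.mem_image, Set.mem_setOf_eq, Walk.support_map, hcoe, List.mem_map]
    constructor
    · rintro ⟨u, hu, rfl⟩
      rw [hγ] at hu
      exact ⟨⟨u, hu.1, rfl⟩, fun he => hu.2.1 (f.injective he),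
        fun he => hu.2.2 (f.injective he)⟩
    · rintro ⟨⟨u, hu, rfl⟩, hwx, hwy⟩
      refine ⟨u, ?_, rfl⟩
      rw [hγ]
      exact ⟨hu, fun he => hwx (by rw [he]), fun he => hwy (by rw [he])⟩
  · rintro v ⟨u, hu, rfl⟩
    rw [GenPolygon.degIn_image]
    exact hdeg u hu

lemma GenPolygon.loop_isPath_nil {u : V} {q : G.Walk u u} (h : q.IsPath) :
    q = SimpleGraph.Walk.nil := by
  cases q with
  | nil => rfl
  | cons h' q' =>
    exfalso
    have hnd := h.support_nodup
    rw [Walk.support_cons] at hnd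
    exact (List.nodup_cons.mp hnd).1 q'.end_mem_support

lemma GenPolygon.walk_tail_subset {S T γ : Set V} {y : V}
    (hclo : ∀ v ∈ γ, v ∈ T → ∀ w, G.Adj v w → w ∈ S → w ∈ T) :
    ∀ {a : V} (q : G.Walk a y), q.IsPath → (∀ v ∈ q.support, v ∈ S) →
      (∀ v ∈ q.support, v ∈ γ ∨ v = y) → a ∈ γ → a ∈ T →
      ∀ v ∈ q.support, v ∈ T := by
  intro a q
  induction q with
  | nil =>
    intro _ _ _ _ haT v hv
    rw [Walk.support_nil, List.mem_singleton] at hv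
    subst hv; exact haT
  | @cons a b y h q ih =>
    intro hp hS hγy haγ haT v hv
    rw [Walk.support_cons, List.mem_cons] at hv
    rcases hv with rfl | hv
    · exact haT
    have hbS : b ∈ S := hS b (by rw [Walk.support_cons]; exact List.mem_cons_of_mem _ q.start_mem_support)
    have hbT : b ∈ T := hclo a haγ haT b h hbS
    have hbγy : b ∈ γ ∨ b = y :=
      hγy b (by rw [Walk.support_cons]; exact List.mem_cons_of_mem _ q.start_mem_support)
    rcases hbγy with hbγ | rfl
    · exact ih hp.of_cons
        (fun w hw => hS w (by rw [Walk.support_cons]; exact List.mem_cons_of_mem _ hw))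
        (fun w hw => hγy w (by rw [Walk.support_cons]; exact List.mem_cons_of_mem _ hw))
        hbγ hbT v hv
    · have hnil : q = SimpleGraph.Walk.nil := GenPolygon.loop_isPath_nil hp.of_cons
      rw [hnil, Walk.support_nil, List.mem_singleton] at hv
      subst hv; exact hbT

end ClosedAlgebraicHelpers

/-- In an open generalized n-gon, a finite set B closed over a
finite set A is algebraic over A: there are at most 2 pairwise disjoint
copies of B over A neighbouring A. -/
theorem closed_is_algebraic {n : ℕ} (hn : 3 ≤ n) {V : Type u}
    (G : SimpleGraph V) (hgon : GenPolygon.IsGenGon n G)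
    (hopen : GenPolygon.IsOpenGraph n G)
    (A B : Set V) (hA : A.Finite) (hB : B.Finite)
    (hclosed : GenPolygon.ClosedOver n G A B) :
    ∀ f₁ f₂ f₃ : G ≃g G,
      (∀ a ∈ A, f₁ a = a) → (∀ a ∈ A, f₂ a = a) → (∀ a ∈ A, f₃ a = a) →
      GenPolygon.Neighbours G A (⇑f₁ '' B) → GenPolygon.Neighbours G A (⇑f₂ '' B) →
      GenPolygon.Neighbours G A (⇑f₃ '' B) →
      Disjoint (⇑f₁ '' B) (⇑f₂ '' B) → Disjoint (⇑f₁ '' B) (⇑f₃ '' B) →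
      Disjoint (⇑f₂ '' B) (⇑f₃ '' B) → False := by
  classical
  intro f₁ f₂ f₃ hf₁ hf₂ hf₃ hN₁ hN₂ hN₃ h12 h13 h23
  obtain ⟨hAB, hBne, hdegB, hnoarc⟩ := hclosed
  -- generic facts about an automorphism fixing A pointwise
  have hfixA : ∀ (f : G ≃g G), (∀ a ∈ A, f a = a) → ⇑f '' A = A := by
    intro f hf
    ext a
    constructor
    · rintro ⟨u, hu, rfl⟩; rw [hf u hu]; exact hu
    · intro ha; exact ⟨a, ha, hf a ha⟩
  have himgAB : ∀ (f : G ≃g G), (∀ a ∈ A, f a = a) → ⇑f '' (A ∪ B) = A ∪ ⇑f '' B := by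
    intro f hf
    rw [Set.image_union, hfixA f hf]
  have hsymmfix : ∀ (f : G ≃g G), (∀ a ∈ A, f a = a) → ∀ a ∈ A, f.symm a = a := by
    intro f hf a ha
    conv_lhs => rw [← hf a ha]
    exact f.symm_apply_apply a
  have hsymm_img : ∀ (f : G ≃g G) (T : Set V), ⇑f.symm '' (⇑f '' T) = T := by
    intro f T
    rw [← Set.image_comp]
    have : (⇑f.symm ∘ ⇑f) = id := funext fun u => f.symm_apply_apply u
    rw [this, Set.image_id]
  have hdisjA : ∀ (f : G ≃g G), (∀ a ∈ A, f a = a) → Disjoint A (⇑f '' B) := by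
    intro f hf
    rw [Set.disjoint_left]
    rintro a ha ⟨b, hb, hfb⟩
    have : f a = a := hf a ha
    have hba : b = a := f.injective (by rw [hfb, this])
    subst hba
    exact (Set.disjoint_left.mp hAB ha) hb
  have hdegC : ∀ (f : G ≃g G), (∀ a ∈ A, f a = a) →
      ∀ v ∈ ⇑f '' B, 2 ≤ GenPolygon.degIn G (A ∪ ⇑f '' B) v := by
    rintro f hf v ⟨b, hb, rfl⟩
    rw [← himgAB f hf, GenPolygon.degIn_image]
    exact hdegB b hb
  -- killing a clean arc with interior inside a single copy of B
  have hkill : ∀ (f : G ≃g G), (∀ a ∈ A, f a = a) → ∀ x y (γ : Set V),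
      x ∈ A ∪ ⇑f '' B → y ∈ A ∪ ⇑f '' B → γ ⊆ ⇑f '' B → γ.Nonempty →
      GenPolygon.IsCleanArcIn n G (A ∪ ⇑f '' B) x y γ → False := by
    intro f hf x y γ hx hy hγ hγne harc
    have harc' := GenPolygon.IsCleanArcIn.image f.symm harc
    have hset : ⇑f.symm '' (A ∪ ⇑f '' B) = A ∪ B := by
      rw [Set.image_union, hfixA f.symm (hsymmfix f hf), hsymm_img f B]
    rw [hset] at harc'
    refine hnoarc ⟨f.symm x, f.symm y, ⇑f.symm '' γ, ?_, ?_, ?_, hγne.image _, harc'⟩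
    · rw [← hset]; exact ⟨x, hx, rfl⟩
    · rw [← hset]; exact ⟨y, hy, rfl⟩
    · intro w hw
      rw [← hsymm_img f B]
      exact Set.image_mono hγ hw
  -- the big finite set
  set S : Set V := A ∪ ((⇑f₁ '' B) ∪ ((⇑f₂ '' B) ∪ (⇑f₃ '' B))) with hS
  have hSfin : S.Finite :=
    hA.union (((hB.image _)).union ((hB.image _).union (hB.image _)))
  have hSne : S.Nonempty := by
    obtain ⟨b, hb⟩ := hBne
    exact ⟨f₁ b, Or.inr (Or.inl ⟨b, hb, rfl⟩)⟩
  have hAS : A ⊆ S := Set.subset_union_left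
  have hBS₁ : (⇑f₁ '' B) ⊆ S := fun v hv => Or.inr (Or.inl hv)
  have hBS₂ : (⇑f₂ '' B) ⊆ S := fun v hv => Or.inr (Or.inr (Or.inl hv))
  have hBS₃ : (⇑f₃ '' B) ⊆ S := fun v hv => Or.inr (Or.inr (Or.inr hv))
  have hnbrfin : ∀ v : V, (G.neighborSet v ∩ S).Finite := fun v =>
    hSfin.inter_of_right _
  have hmono : ∀ (T : Set V) (v : V), T ⊆ S →
      GenPolygon.degIn G T v ≤ GenPolygon.degIn G S v := by
    intro T v hTS
    rw [GenPolygon.degIn_def, GenPolygon.degIn_def]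
    exact Set.ncard_le_ncard (Set.inter_subset_inter_right _ hTS) (hnbrfin v)
  -- vertices of A have ≥ 3 neighbours in S
  have hAdeg : ∀ v ∈ A, 3 ≤ GenPolygon.degIn G S v := by
    intro v hv
    obtain ⟨b₁, hb₁, hadj₁⟩ := hN₁ v hv
    obtain ⟨b₂, hb₂, hadj₂⟩ := hN₂ v hv
    obtain ⟨b₃, hb₃, hadj₃⟩ := hN₃ v hv
    have hne12 : b₁ ≠ b₂ := fun he => (Set.disjoint_left.mp h12 hb₁.1) (he ▸ hb₂.1)
    have hne13 : b₁ ≠ b₃ := fun he => (Set.disjoint_left.mp h13 hb₁.1) (he ▸ hb₃.1)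
    have hne23 : b₂ ≠ b₃ := fun he => (Set.disjoint_left.mp h23 hb₂.1) (he ▸ hb₃.1)
    have hsub : ({b₁, b₂, b₃} : Set V) ⊆ G.neighborSet v ∩ S := by
      rintro w (rfl | rfl | rfl)
      · exact ⟨hadj₁, hBS₁ hb₁.1⟩
      · exact ⟨hadj₂, hBS₂ hb₂.1⟩
      · exact ⟨hadj₃, hBS₃ hb₃.1⟩
    have hcard : ({b₁, b₂, b₃} : Set V).ncard = 3 := by
      rw [Set.ncard_insert_of_notMem (by simp [hne12, hne13])
        ((Set.finite_singleton _).insert _), Set.ncard_pair hne23]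
    rw [GenPolygon.degIn_def, ← hcard]
    exact Set.ncard_le_ncard hsub (hnbrfin v)
  rcases hopen S (Set.subset_univ S) hSfin hSne with hloose | harch
  · -- no loose ends
    obtain ⟨v, hvS, hvdeg⟩ := hloose
    rcases hvS with hvA | hv1 | hv2 | hv3
    · have := hAdeg v hvA; omega
    · have h2 := hdegC f₁ hf₁ v hv1
      have := hmono (A ∪ (⇑f₁ '' B)) v (Set.union_subset hAS hBS₁)
      omega
    · have h2 := hdegC f₂ hf₂ v hv2
      have := hmono (A ∪ (⇑f₂ '' B)) v (Set.union_subset hAS hBS₂)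
      omega
    · have h2 := hdegC f₃ hf₃ v hv3
      have := hmono (A ∪ (⇑f₃ '' B)) v (Set.union_subset hAS hBS₃)
      omega
  · -- clean arch in S
    obtain ⟨x, y, γ, hxS, hyS, hγne, harc⟩ := harch
    obtain ⟨p, hp, hlen, hsupp, hγeq, hdeg2⟩ := harc
    have hγsupp : ∀ v ∈ γ, v ∈ p.support ∧ v ≠ x ∧ v ≠ y := by
      intro v hv; rw [hγeq] at hv; exact hv
    have hγS : ∀ v ∈ γ, v ∈ S := fun v hv => hsupp v (hγsupp v hv).1
    have hγA : ∀ v ∈ γ, v ∉ A := by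
      intro v hv hvA
      have h3 := hAdeg v hvA
      have h2 := hdeg2 v hv
      omega
    cases p with
    | nil => rw [Walk.length_nil] at hlen; omega
    | @cons _ v₁ _ h q =>
      rw [Walk.length_cons] at hlen
      have hv₁supp : v₁ ∈ q.support := q.start_mem_support
      have hxq : x ∉ q.support := by
        have hnd := hp.support_nodup
        rw [Walk.support_cons] at hnd
        exact (List.nodup_cons.mp hnd).1
      have hqpath : q.IsPath := hp.of_cons
      have hv₁x : v₁ ≠ x := fun he => hxq (he ▸ hv₁supp)
      have hv₁y : v₁ ≠ y := by
        intro he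
        subst he
        have hnil := GenPolygon.loop_isPath_nil hqpath
        rw [hnil, Walk.length_nil] at hlen
        omega
      have hv₁γ : v₁ ∈ γ := by
        rw [hγeq]
        exact ⟨by rw [Walk.support_cons]; exact List.mem_cons_of_mem _ hv₁supp, hv₁x, hv₁y⟩
      have hqS : ∀ v ∈ q.support, v ∈ S := fun v hv =>
        hsupp v (by rw [Walk.support_cons]; exact List.mem_cons_of_mem _ hv)
      have hqγy : ∀ v ∈ q.support, v ∈ γ ∨ v = y := by
        intro v hv
        by_cases hvy : v = y
        · exact Or.inr hvy
        · refine Or.inl ?_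
          rw [hγeq]
          exact ⟨by rw [Walk.support_cons]; exact List.mem_cons_of_mem _ hv,
            fun he => hxq (he ▸ hv), hvy⟩
      -- finishing argument, uniform in the copy of B
      have hfinish : ∀ (f : G ≃g G), (∀ a ∈ A, f a = a) →
          GenPolygon.Neighbours G A (⇑f '' B) → ⇑f '' B ⊆ S → v₁ ∈ ⇑f '' B → False := by
        intro f hf _ hfBS hv₁C
        have hACS : A ∪ (⇑f '' B) ⊆ S := Set.union_subset hAS hfBS
        have hACfin : (A ∪ (⇑f '' B)).Finite := hA.union (hB.image _)
        have hclo : ∀ v ∈ γ, v ∈ (⇑f '' B) → ∀ w, G.Adj v w → w ∈ S → w ∈ A ∪ (⇑f '' B) := by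
          intro v hvγ hvC w hadj hwS
          by_contra hwAC
          have hsub1 : G.neighborSet v ∩ (A ∪ (⇑f '' B)) ⊆ G.neighborSet v ∩ S :=
            Set.inter_subset_inter_right _ hACS
          have hsub2 : insert w (G.neighborSet v ∩ (A ∪ (⇑f '' B))) ⊆ G.neighborSet v ∩ S :=
            Set.insert_subset ⟨hadj, hwS⟩ hsub1
          have hcard : (insert w (G.neighborSet v ∩ (A ∪ (⇑f '' B)))).ncard =
              (G.neighborSet v ∩ (A ∪ (⇑f '' B))).ncard + 1 :=
            Set.ncard_insert_of_notMem (fun hmem => hwAC hmem.2)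
              (hACfin.inter_of_right _)
          have hle := Set.ncard_le_ncard hsub2 (hnbrfin v)
          have h2 := hdegC f hf v hvC
          have h2' := hdeg2 v hvγ
          rw [GenPolygon.degIn_def] at h2 h2'
          omega
        have hclo' : ∀ v ∈ γ, v ∈ A ∪ (⇑f '' B) → ∀ w, G.Adj v w → w ∈ S → w ∈ A ∪ (⇑f '' B) := by
          intro v hvγ hvT w hadj hwS
          rcases hvT with hvA | hvC
          · exact absurd hvA (hγA v hvγ)
          · exact hclo v hvγ hvC w hadj hwS
        have hqT : ∀ v ∈ q.support, v ∈ A ∪ (⇑f '' B) :=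
          GenPolygon.walk_tail_subset hclo' q hqpath hqS hqγy hv₁γ (Or.inr hv₁C)
        have hyT : y ∈ A ∪ (⇑f '' B) := hqT y q.end_mem_support
        have hxT : x ∈ A ∪ (⇑f '' B) := hclo v₁ hv₁γ hv₁C x h.symm
          (hsupp x (Walk.start_mem_support _))
        have hsuppT : ∀ v ∈ (Walk.cons h q).support, v ∈ A ∪ (⇑f '' B) := by
          intro v hv
          rw [Walk.support_cons, List.mem_cons] at hv
          rcases hv with rfl | hv
          · exact hxT
          · exact hqT v hv
        have hγC : γ ⊆ (⇑f '' B) := by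
          intro v hv
          obtain ⟨hvsupp, hvx, hvy⟩ := hγsupp v hv
          rw [Walk.support_cons, List.mem_cons] at hvsupp
          rcases hvsupp with rfl | hvsupp
          · exact absurd rfl hvx
          · rcases hqT v hvsupp with hvA | hvC
            · exact absurd hvA (hγA v hv)
            · exact hvC
        have harc' : GenPolygon.IsCleanArcIn n G (A ∪ (⇑f '' B)) x y γ := by
          refine ⟨Walk.cons h q, hp, by rw [Walk.length_cons]; omega, hsuppT, hγeq, ?_⟩
          intro v hv
          have hle := hmono (A ∪ (⇑f '' B)) v hACS
          have h2 := hdegC f hf v (hγC hv)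
          have h2' := hdeg2 v hv
          omega
        exact hkill f hf x y γ hxT hyT hγC hγne harc'
      rcases hγS v₁ hv₁γ with hv₁A | hv₁1 | hv₁2 | hv₁3
      · exact (hγA v₁ hv₁γ) hv₁A
      · exact hfinish f₁ hf₁ hN₁ hBS₁ hv₁1
      · exact hfinish f₂ hf₂ hN₂ hBS₂ hv₁2
      · exact hfinish f₃ hf₃ hN₃ hBS₃ hv₁3
end

section
/- If a graph B arises from a graph A by successively adding clean arches between pairs of vertices at distance n+1, then A ≤_n B and δ_n(A) = δ_n(B). -/
open SimpleGraph

universe u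

namespace GenPolygonAux
open GenPolygon

variable {V : Type u} {G : SimpleGraph V} {n : ℕ}

lemma getVert_mem_support {x y : V} (p : G.Walk x y) {i : ℕ} (hi : i ≤ p.length) :
    p.getVert i ∈ p.support :=
  SimpleGraph.Walk.mem_support_iff_exists_getVert.mpr ⟨i, rfl, hi⟩

lemma getVert_injOn {x y : V} {p : G.Walk x y} (hp : p.IsPath) :
    Set.InjOn p.getVert {i | i ≤ p.length} := by
  induction p with
  | nil => intro i hi j hj _; simp only [Set.mem_setOf_eq, SimpleGraph.Walk.length_nil,
      Nat.le_zero] at hi hj; omega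
  | cons h q ih =>
    rw [SimpleGraph.Walk.cons_isPath_iff] at hp
    intro i hi j hj hij
    simp only [Set.mem_setOf_eq, SimpleGraph.Walk.length_cons] at hi hj
    match i, j with
    | 0, 0 => rfl
    | 0, j + 1 =>
      exfalso
      rw [SimpleGraph.Walk.getVert_zero, SimpleGraph.Walk.getVert_cons_succ] at hij
      exact hp.2 (hij ▸ getVert_mem_support q (by omega))
    | i + 1, 0 =>
      exfalso
      rw [SimpleGraph.Walk.getVert_zero, SimpleGraph.Walk.getVert_cons_succ] at hij
      exact hp.2 (hij ▸ getVert_mem_support q (by omega))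
    | i + 1, j + 1 =>
      rw [SimpleGraph.Walk.getVert_cons_succ, SimpleGraph.Walk.getVert_cons_succ] at hij
      have := ih hp.1 (show i ∈ {i | i ≤ q.length} by simp only [Set.mem_setOf_eq]; omega)
        (show j ∈ {i | i ≤ q.length} by simp only [Set.mem_setOf_eq]; omega) hij
      omega

lemma mem_edges_iff_getVert {x y : V} (p : G.Walk x y) (e : Sym2 V) :
    e ∈ p.edges ↔ ∃ i < p.length, e = s(p.getVert i, p.getVert (i + 1)) := by
  induction p with
  | nil => simp
  | cons h q ih =>
    simp only [SimpleGraph.Walk.edges_cons, List.mem_cons, ih, SimpleGraph.Walk.length_cons]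
    constructor
    · rintro (rfl | ⟨i, hi, rfl⟩)
      · exact ⟨0, by omega, by rw [SimpleGraph.Walk.getVert_zero,
          SimpleGraph.Walk.getVert_cons_succ, SimpleGraph.Walk.getVert_zero]⟩
      · exact ⟨i + 1, by omega, by rw [SimpleGraph.Walk.getVert_cons_succ,
          SimpleGraph.Walk.getVert_cons_succ]⟩
    · rintro ⟨i, hi, rfl⟩
      match i with
      | 0 => left; rw [SimpleGraph.Walk.getVert_zero, SimpleGraph.Walk.getVert_cons_succ,
          SimpleGraph.Walk.getVert_zero]
      | i + 1 =>
        right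
        exact ⟨i, by omega, by rw [SimpleGraph.Walk.getVert_cons_succ,
          SimpleGraph.Walk.getVert_cons_succ]⟩

lemma edgesIn_mono {X Y : Set V} (h : X ⊆ Y) : edgesIn G X ⊆ edgesIn G Y :=
  fun _ he => ⟨he.1, fun v hv => h (he.2 v hv)⟩

lemma edgesIn_finite {X : Set V} (hX : X.Finite) : (edgesIn G X).Finite := by
  apply ((hX.prod hX).image (fun ab => s(ab.1, ab.2))).subset
  intro e
  induction e using Sym2.ind with
  | _ a b =>
    rintro ⟨_, hv⟩
    exact ⟨(a, b), ⟨hv a (by simp), hv b (by simp)⟩, rfl⟩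

lemma edges_with_vertex_sub {X : Set V} {z : V} :
    {e | e ∈ edgesIn G X ∧ z ∈ e} ⊆ (fun w => s(z, w)) '' (G.neighborSet z ∩ X) := by
  intro e
  induction e using Sym2.ind with
  | _ a b =>
    rintro ⟨⟨heE, hv⟩, hz⟩
    rw [Sym2.mem_iff] at hz
    rw [SimpleGraph.mem_edgeSet] at heE
    rcases hz with rfl | rfl
    · exact ⟨b, ⟨heE, hv b (by simp)⟩, rfl⟩
    · exact ⟨a, ⟨heE.symm, hv a (by simp)⟩, Sym2.eq_swap⟩

lemma delta_remove_le {X : Set V} {z : V} (hn : 3 ≤ n) (hX : X.Finite) (hz : z ∈ X)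
    (hd : degIn G X z ≤ 1) : delta n G (X \ {z}) ≤ delta n G X := by
  have hX' : (X \ {z}).Finite := hX.diff
  have hpos : 0 < X.ncard := (Set.ncard_pos hX).mpr ⟨z, hz⟩
  have hcard : X.ncard = (X \ {z}).ncard + 1 := by
    rw [Set.ncard_diff_singleton_of_mem hz]; omega
  have hNfin : (G.neighborSet z ∩ X).Finite := hX.inter_of_right _
  have himgfin : ((fun w => s(z, w)) '' (G.neighborSet z ∩ X)).Finite := hNfin.image _
  have hsub : edgesIn G X ⊆
      edgesIn G (X \ {z}) ∪ (fun w => s(z, w)) '' (G.neighborSet z ∩ X) := by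
    intro e
    induction e using Sym2.ind with
    | _ a b =>
      rintro ⟨heE, hv⟩
      by_cases hze : z ∈ s(a, b)
      · exact Or.inr (edges_with_vertex_sub ⟨⟨heE, hv⟩, hze⟩)
      · exact Or.inl ⟨heE, fun v hvm =>
          ⟨hv v hvm, fun hveq => hze (Set.mem_singleton_iff.mp hveq ▸ hvm)⟩⟩
  have h1 : (edgesIn G X).ncard ≤ (edgesIn G (X \ {z})).ncard + 1 := by
    have s1 : (edgesIn G X).ncard ≤
        (edgesIn G (X \ {z}) ∪ (fun w => s(z, w)) '' (G.neighborSet z ∩ X)).ncard :=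
      Set.ncard_le_ncard hsub ((edgesIn_finite hX').union himgfin)
    have s2 := Set.ncard_union_le (edgesIn G (X \ {z}))
      ((fun w => s(z, w)) '' (G.neighborSet z ∩ X))
    have s3 := Set.ncard_image_le (f := fun w => s(z, w)) hNfin
    have s4 : (G.neighborSet z ∩ X).ncard ≤ 1 := hd
    omega
  have h2 : (edgesIn G (X \ {z})).ncard ≤ (edgesIn G X).ncard :=
    Set.ncard_le_ncard (edgesIn_mono Set.diff_subset) (edgesIn_finite hX)
  unfold delta
  rw [hcard]
  have c1 : ((edgesIn G X).ncard : ℤ) ≤ ((edgesIn G (X \ {z})).ncard : ℤ) + 1 := by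
    exact_mod_cast h1
  have c2 : ((edgesIn G (X \ {z})).ncard : ℤ) ≤ ((edgesIn G X).ncard : ℤ) := by
    exact_mod_cast h2
  have hn' : (3 : ℤ) ≤ (n : ℤ) := by exact_mod_cast hn
  push_cast
  nlinarith [c1, c2, hn']

end GenPolygonAux

namespace GenPolygonAux
open GenPolygon

lemma step_key {V : Type u} {G : SimpleGraph V} {n : ℕ} {S T γ : Set V} {x y : V}
    {p : G.Walk x y} (hn : 3 ≤ n) (hSfin : S.Finite)
    (hp : p.IsPath) (hlen : p.length = n - 1) (hx : x ∈ S) (hy : y ∈ S)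
    (hγ : γ = {v | v ∈ p.support ∧ v ≠ x ∧ v ≠ y})
    (hT : T = S ∪ γ) (hdisj : Disjoint S γ)
    (hdeg : ∀ v ∈ γ, degIn G T v = 2) :
    T.Finite ∧ (∀ X ⊆ T, X.Finite → delta n G (X ∩ S) ≤ delta n G X) ∧
      delta n G S = delta n G T := by
  classical
  simp only [degIn] at hdeg
  have hinj := getVert_injOn hp
  have hlen2 : 2 ≤ p.length := by omega
  -- interior membership characterisations
  have hmemγ : ∀ i, 1 ≤ i → i + 1 ≤ p.length → p.getVert i ∈ γ := by
    intro i h1 h2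
    rw [hγ]
    refine ⟨getVert_mem_support p (by omega), fun h => ?_, fun h => ?_⟩
    · have := hinj (show i ∈ {j | j ≤ p.length} by simp only [Set.mem_setOf_eq]; omega)
        (show 0 ∈ {j | j ≤ p.length} by simp only [Set.mem_setOf_eq]; omega)
        (by rw [p.getVert_zero, h])
      omega
    · have := hinj (show i ∈ {j | j ≤ p.length} by simp only [Set.mem_setOf_eq]; omega)
        (show p.length ∈ {j | j ≤ p.length} by simp only [Set.mem_setOf_eq]; exact le_rfl)
        (by rw [p.getVert_length, h])
      omega
  have hγmem : ∀ v ∈ γ, ∃ i, 1 ≤ i ∧ i + 1 ≤ p.length ∧ p.getVert i = v := by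
    intro v hv
    rw [hγ] at hv
    obtain ⟨hs, hvx, hvy⟩ := hv
    obtain ⟨i, hvi, hile⟩ := SimpleGraph.Walk.mem_support_iff_exists_getVert.mp hs
    refine ⟨i, ?_, ?_, hvi⟩
    · rcases Nat.eq_zero_or_pos i with rfl | h1
      · exact absurd (hvi.symm.trans p.getVert_zero) hvx
      · omega
    · rcases eq_or_lt_of_le hile with rfl | h2
      · exact absurd (hvi.symm.trans p.getVert_length) hvy
      · omega
  have hsup' : ∀ (W : Set V), x ∈ W → y ∈ W → γ ⊆ W → ∀ v ∈ p.support, v ∈ W := by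
    intro W hxW hyW hγW v hv
    obtain ⟨i, hgv, hile⟩ := SimpleGraph.Walk.mem_support_iff_exists_getVert.mp hv
    subst hgv
    rcases Nat.eq_zero_or_pos i with rfl | h1
    · rw [p.getVert_zero]; exact hxW
    rcases eq_or_lt_of_le hile with rfl | h2
    · rw [p.getVert_length]; exact hyW
    · exact hγW (hmemγ i h1 (by omega))
  have hγsubT : γ ⊆ T := by rw [hT]; exact Set.subset_union_right
  have hSsubT : S ⊆ T := by rw [hT]; exact Set.subset_union_left
  have hxT : x ∈ T := hSsubT hx
  have hyT : y ∈ T := hSsubT hy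
  have hsupT : ∀ v ∈ p.support, v ∈ T := hsup' T hxT hyT hγsubT
  -- neighbourhoods of interior vertices
  have hNeigh : ∀ j, j + 2 ≤ p.length →
      G.neighborSet (p.getVert (j + 1)) ∩ T = {p.getVert j, p.getVert (j + 2)} := by
    intro j hj
    have hvγ : p.getVert (j + 1) ∈ γ := hmemγ (j + 1) (by omega) (by omega)
    have hcard := hdeg _ hvγ
    have hne2 : p.getVert j ≠ p.getVert (j + 2) := by
      intro h
      have := hinj (show j ∈ {i | i ≤ p.length} by simp only [Set.mem_setOf_eq]; omega)
        (show j + 2 ∈ {i | i ≤ p.length} by simp only [Set.mem_setOf_eq]; omega) h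
      omega
    have hsub2 : ({p.getVert j, p.getVert (j + 2)} : Set V) ⊆
        G.neighborSet (p.getVert (j + 1)) ∩ T := by
      intro v hv
      simp only [Set.mem_insert_iff, Set.mem_singleton_iff] at hv
      rcases hv with rfl | rfl
      · exact ⟨(p.adj_getVert_succ (by omega : j < p.length)).symm,
          hsupT _ (getVert_mem_support p (by omega))⟩
      · exact ⟨p.adj_getVert_succ (by omega : j + 1 < p.length),
          hsupT _ (getVert_mem_support p (by omega))⟩
    refine (Set.eq_of_subset_of_ncard_le hsub2 ?_ ?_).symm
    · rw [hcard, Set.ncard_pair hne2]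
    · obtain ⟨a, b, -, hset⟩ := Set.ncard_eq_two.mp hcard
      rw [hset]
      exact (Set.finite_singleton b).insert a
  have hedge : ∀ i, i + 1 ≤ p.length → s(p.getVert i, p.getVert (i + 1)) ∈ p.edges :=
    fun i hi => (mem_edges_iff_getVert p _).mpr ⟨i, by omega, rfl⟩
  -- cardinality of γ
  have hγim : γ = p.getVert '' {i | 1 ≤ i ∧ i + 1 ≤ p.length} := by
    ext v
    constructor
    · intro hv
      obtain ⟨i, h1, h2, hvi⟩ := hγmem v hv
      exact ⟨i, ⟨h1, h2⟩, hvi⟩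
    · rintro ⟨i, ⟨h1, h2⟩, rfl⟩
      exact hmemγ i h1 h2
  have hγcard : γ.ncard = n - 2 := by
    rw [hγim, Set.ncard_image_of_injOn (hinj.mono (fun i hi => by
      simp only [Set.mem_setOf_eq] at hi ⊢; omega))]
    have hIcc : {i : ℕ | 1 ≤ i ∧ i + 1 ≤ p.length} = ↑(Finset.Icc 1 (p.length - 1)) := by
      ext i
      simp only [Set.mem_setOf_eq, Finset.coe_Icc, Set.mem_Icc]
      omega
    rw [hIcc, Set.ncard_coe_finset, Nat.card_Icc]
    omega
  have hγfin : γ.Finite := by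
    rw [hγ]
    exact p.support.finite_toSet.subset (fun v hv => hv.1)
  have hTfin : T.Finite := by rw [hT]; exact hSfin.union hγfin
  -- the equality case
  have deltaA : ∀ X ⊆ T, X.Finite → γ ⊆ X → x ∈ X → y ∈ X →
      delta n G X = delta n G (X ∩ S) := by
    intro X hXT hXfin hγX hxX hyX
    have hYfin : (X ∩ S).Finite := hXfin.inter_of_left _
    have hXdecomp : X = (X ∩ S) ∪ γ := by
      apply Set.Subset.antisymm
      · intro v hv
        have hvT := hXT hv
        rw [hT] at hvT
        rcases hvT with hvS | hvγ
        · exact Or.inl ⟨hv, hvS⟩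
        · exact Or.inr hvγ
      · rintro v (hv | hv)
        · exact hv.1
        · exact hγX hv
    have hdisjY : Disjoint (X ∩ S) γ := hdisj.mono_left Set.inter_subset_right
    have hcardX : X.ncard = (X ∩ S).ncard + (n - 2) := by
      calc X.ncard = ((X ∩ S) ∪ γ).ncard := by rw [← hXdecomp]
        _ = (X ∩ S).ncard + γ.ncard := Set.ncard_union_eq hdisjY hYfin hγfin
        _ = (X ∩ S).ncard + (n - 2) := by rw [hγcard]
    have hsupX : ∀ v ∈ p.support, v ∈ X := hsup' X hxX hyX hγX
    have hEP : {e | e ∈ p.edges} ⊆ edgesIn G X := by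
      intro e
      induction e using Sym2.ind with
      | _ a b =>
        intro he
        refine ⟨p.edges_subset_edgeSet he, ?_⟩
        intro v hv
        rw [Sym2.mem_iff] at hv
        rcases hv with rfl | rfl
        · exact hsupX _ (p.fst_mem_support_of_mem_edges he)
        · exact hsupX _ (p.snd_mem_support_of_mem_edges he)
    have hEPcard : {e | e ∈ p.edges}.ncard = n - 1 := by
      have hnd : p.edges.Nodup := hp.isTrail.edges_nodup
      have hcoe : {e | e ∈ p.edges} = ↑p.edges.toFinset := by
        ext e; simp
      rw [hcoe, Set.ncard_coe_finset, List.toFinset_card_of_nodup hnd, p.length_edges, hlen]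
    have hclaim : ∀ a b, a ∈ γ → b ∈ X → G.Adj a b → s(a, b) ∈ p.edges := by
      intro a b haγ hbX hadj
      obtain ⟨i, h1, h2, rfl⟩ := hγmem a haγ
      obtain ⟨j, rfl⟩ : ∃ j, i = j + 1 := ⟨i - 1, by omega⟩
      have hbN : b ∈ G.neighborSet (p.getVert (j + 1)) ∩ T := ⟨hadj, hXT hbX⟩
      rw [hNeigh j (by omega)] at hbN
      simp only [Set.mem_insert_iff, Set.mem_singleton_iff] at hbN
      rcases hbN with rfl | rfl
      · rw [Sym2.eq_swap]; exact hedge j (by omega)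
      · exact hedge (j + 1) (by omega)
    have hEdecomp : edgesIn G X = edgesIn G (X ∩ S) ∪ {e | e ∈ p.edges} := by
      apply Set.Subset.antisymm
      · intro e
        induction e using Sym2.ind with
        | _ a b =>
          rintro ⟨heE, hv⟩
          have haX : a ∈ X := hv a (by simp)
          have hbX : b ∈ X := hv b (by simp)
          have hadj : G.Adj a b := G.mem_edgeSet.mp heE
          by_cases haγ : a ∈ γ
          · exact Or.inr (hclaim a b haγ hbX hadj)
          by_cases hbγ : b ∈ γ
          · right
            rw [Sym2.eq_swap]
            exact hclaim b a hbγ haX hadj.symm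
          · left
            refine ⟨heE, ?_⟩
            intro v hv'
            rw [Sym2.mem_iff] at hv'
            have hmem : ∀ w, w ∈ X → w ∉ γ → w ∈ X ∩ S := by
              intro w hwX hwγ
              have hwT := hXT hwX
              rw [hT] at hwT
              rcases hwT with h | h
              · exact ⟨hwX, h⟩
              · exact absurd h hwγ
            rcases hv' with rfl | rfl
            · exact hmem v haX haγ
            · exact hmem v hbX hbγ
      · rintro e (he | he)
        · exact edgesIn_mono Set.inter_subset_left he
        · exact hEP he
    have hdisjE : Disjoint (edgesIn G (X ∩ S)) {e | e ∈ p.edges} := by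
      rw [Set.disjoint_right]
      intro e he heY
      obtain ⟨i, hi, rfl⟩ := (mem_edges_iff_getVert p e).mp he
      have hint : ∃ v ∈ γ, v ∈ s(p.getVert i, p.getVert (i + 1)) := by
        rcases Nat.eq_zero_or_pos i with rfl | h1
        · exact ⟨p.getVert 1, hmemγ 1 le_rfl (by omega), by simp⟩
        · exact ⟨p.getVert i, hmemγ i h1 (by omega), by simp⟩
      obtain ⟨v, hvγ, hve⟩ := hint
      exact Set.disjoint_right.mp hdisj hvγ (heY.2 v hve).2
    have hEfin : (edgesIn G (X ∩ S)).Finite := edgesIn_finite hYfin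
    have hEPfin : {e | e ∈ p.edges}.Finite := p.edges.finite_toSet
    have hcardE : (edgesIn G X).ncard = (edgesIn G (X ∩ S)).ncard + (n - 1) := by
      rw [hEdecomp, Set.ncard_union_eq hdisjE hEfin hEPfin, hEPcard]
    have e1 : ((n - 2 : ℕ) : ℤ) = (n : ℤ) - 2 := by omega
    have e2 : ((n - 1 : ℕ) : ℤ) = (n : ℤ) - 1 := by omega
    unfold delta
    rw [hcardX, hcardE]
    push_cast [e1, e2]
    ring
  -- the main inequality, by strong induction
  have main : ∀ N (X : Set V), X ⊆ T → X.Finite → X.ncard ≤ N →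
      delta n G (X ∩ S) ≤ delta n G X := by
    intro N
    induction N with
    | zero =>
      intro X hXT hXfin hc
      have hXe : X = ∅ := (Set.ncard_eq_zero hXfin).mp (by omega)
      rw [hXe, Set.empty_inter]
    | succ N ih =>
      intro X hXT hXfin hc
      by_cases hXγ : (X ∩ γ).Nonempty
      · by_cases hcase : ∃ z ∈ X ∩ γ, degIn G X z ≤ 1
        · obtain ⟨z, hz, hdz⟩ := hcase
          have hzX : z ∈ X := hz.1
          have hzS : z ∉ S := Set.disjoint_right.mp hdisj hz.2
          have h1 : (X \ {z}) ∩ S = X ∩ S := by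
            ext v
            constructor
            · rintro ⟨⟨hvX, -⟩, hvS⟩; exact ⟨hvX, hvS⟩
            · rintro ⟨hvX, hvS⟩
              exact ⟨⟨hvX, fun h => hzS (Set.mem_singleton_iff.mp h ▸ hvS)⟩, hvS⟩
          have hpos := (Set.ncard_pos hXfin).mpr ⟨z, hzX⟩
          calc delta n G (X ∩ S) = delta n G ((X \ {z}) ∩ S) := by rw [h1]
            _ ≤ delta n G (X \ {z}) := ih _ (Set.diff_subset.trans hXT) hXfin.diff
                (by rw [Set.ncard_diff_singleton_of_mem hzX]; omega)
            _ ≤ delta n G X := delta_remove_le hn hXfin hzX hdz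
        · push_neg at hcase
          simp only [degIn] at hcase
          have hNX : ∀ z ∈ X ∩ γ, G.neighborSet z ∩ T ⊆ X := by
            intro z hz
            have h2le := hcase z hz
            obtain ⟨i, h1, h2, hvi⟩ := hγmem z hz.2
            subst hvi
            obtain ⟨j, rfl⟩ : ∃ j, i = j + 1 := ⟨i - 1, by omega⟩
            have hN := hNeigh j (by omega)
            have hfinNT : (G.neighborSet (p.getVert (j + 1)) ∩ T).Finite := by
              rw [hN]; exact (Set.finite_singleton _).insert _
            have hsubXT : G.neighborSet (p.getVert (j + 1)) ∩ X ⊆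
                G.neighborSet (p.getVert (j + 1)) ∩ T :=
              Set.inter_subset_inter_right _ hXT
            have heqNX : G.neighborSet (p.getVert (j + 1)) ∩ X =
                G.neighborSet (p.getVert (j + 1)) ∩ T := by
              apply Set.eq_of_subset_of_ncard_le hsubXT ?_ hfinNT
              rw [hdeg _ hz.2]
              omega
            rw [← heqNX]
            exact Set.inter_subset_right
          obtain ⟨z0, hz0⟩ := hXγ
          obtain ⟨i0, hi1, hi2, hvz⟩ := hγmem z0 hz0.2
          have hstep2 : ∀ i, 1 ≤ i → i + 1 ≤ p.length → p.getVert i ∈ X →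
              p.getVert (i + 1) ∈ X ∧ p.getVert (i - 1) ∈ X := by
            intro i h1 h2 hiX
            have hγi := hmemγ i h1 h2
            have hsubN := hNX _ ⟨hiX, hγi⟩
            obtain ⟨j, rfl⟩ : ∃ j, i = j + 1 := ⟨i - 1, by omega⟩
            rw [hNeigh j (by omega)] at hsubN
            constructor
            · exact hsubN (Set.mem_insert_of_mem _ rfl)
            · simpa using hsubN (Set.mem_insert _ _)
          have hup : ∀ d, i0 + d ≤ p.length → p.getVert (i0 + d) ∈ X := by
            intro d
            induction d with
            | zero => intro _; simpa [hvz] using hz0.1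
            | succ d ihd =>
              intro hd
              have hx1 := ihd (by omega)
              have := (hstep2 (i0 + d) (by omega) (by omega) hx1).1
              rwa [show i0 + (d + 1) = i0 + d + 1 by omega]
          have hdown : ∀ d, d ≤ i0 → p.getVert (i0 - d) ∈ X := by
            intro d
            induction d with
            | zero => intro _; simpa [hvz] using hz0.1
            | succ d ihd =>
              intro hd
              have hx1 := ihd (by omega)
              have h1 : 1 ≤ i0 - d := by omega
              have h2 : (i0 - d) + 1 ≤ p.length := by omega
              have := (hstep2 (i0 - d) h1 h2 hx1).2
              rwa [show i0 - d - 1 = i0 - (d + 1) by omega] at this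
          have hall : ∀ i ≤ p.length, p.getVert i ∈ X := by
            intro i hi
            rcases le_or_gt i i0 with h | h
            · have := hdown (i0 - i) (by omega)
              rwa [show i0 - (i0 - i) = i by omega] at this
            · have := hup (i - i0) (by omega)
              rwa [show i0 + (i - i0) = i by omega] at this
          have hxX : x ∈ X := by
            have := hall 0 (by omega)
            rwa [p.getVert_zero] at this
          have hyX : y ∈ X := by
            have := hall p.length le_rfl
            rwa [p.getVert_length] at this
          have hγX : γ ⊆ X := by
            intro v hv
            obtain ⟨i, h1, h2, rfl⟩ := hγmem v hv
            exact hall i (by omega)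
          exact le_of_eq (deltaA X hXT hXfin hγX hxX hyX).symm
      · have hXS : X ∩ S = X := by
          apply Set.inter_eq_self_of_subset_left
          intro v hv
          have hvT := hXT hv
          rw [hT] at hvT
          rcases hvT with h | h
          · exact h
          · exact absurd ⟨hv, h⟩ (fun hc' => hXγ ⟨v, hc'⟩)
        rw [hXS]
  refine ⟨hTfin, fun X hXT hXfin => main X.ncard X hXT hXfin le_rfl, ?_⟩
  have hTS : T ∩ S = S := Set.inter_eq_self_of_subset_right hSsubT
  have := deltaA T subset_rfl hTfin hγsubT hxT hyT
  rw [hTS] at this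
  exact this.symm

lemma cleanArcStep_key {V : Type u} {G : SimpleGraph V} {n : ℕ} {S T : Set V}
    (hn : 3 ≤ n) (hSfin : S.Finite) (h : CleanArcStep n G S T) :
    T.Finite ∧ S ⊆ T ∧ (∀ X ⊆ T, X.Finite → delta n G (X ∩ S) ≤ delta n G X) ∧
      delta n G S = delta n G T := by
  obtain ⟨hST, x, y, hxS, hyS, hdist, hdisj, harc⟩ := h
  have hun : S ∪ T \ S = T := Set.union_diff_cancel hST
  rw [hun] at harc
  obtain ⟨p, hp, hplen, hpsup, hγeq, hdeg⟩ := harc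
  obtain ⟨hT1, h2, h3⟩ := step_key hn hSfin hp hplen hxS hyS hγeq hun.symm hdisj hdeg
  exact ⟨hT1, hST, h2, h3⟩

end GenPolygonAux
/-- If B arises from A by successively attaching clean arcs
between vertices at distance n+1, then A ≤ₙ B and δₙ(A) = δₙ(B). -/
theorem arcs_nstrong_delta_eq {n : ℕ} (hn : 3 ≤ n) {V : Type u}
    (G : SimpleGraph V) (A B : Set V) (hA : A.Finite)
    (m : ℕ) (c : ℕ → Set V) (h0 : c 0 = A) (hm : c m = B)
    (hstep : ∀ i < m, GenPolygon.CleanArcStep n G (c i) (c (i + 1))) :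
    GenPolygon.NStrong n G A B ∧ GenPolygon.delta n G A = GenPolygon.delta n G B := by
  have key : ∀ i ≤ m, (c i).Finite ∧ A ⊆ c i ∧
      (∀ X ⊆ c i, X.Finite → GenPolygon.delta n G (X ∩ A) ≤ GenPolygon.delta n G X) ∧
      GenPolygon.delta n G A = GenPolygon.delta n G (c i) := by
    intro i
    induction i with
    | zero =>
      intro _
      rw [h0]
      exact ⟨hA, subset_rfl,
        fun X hX _ => le_of_eq (by rw [Set.inter_eq_self_of_subset_left hX]), rfl⟩
    | succ i ih =>
      intro hi
      obtain ⟨hfin, hAc, hstr, hdel⟩ := ih (by omega)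
      obtain ⟨hTfin, hsub, hstr', hdel'⟩ :=
        GenPolygonAux.cleanArcStep_key hn hfin (hstep i (by omega))
      refine ⟨hTfin, hAc.trans hsub, ?_, hdel.trans hdel'⟩
      intro X hX hXfin
      have h1 : (X ∩ c i) ∩ A = X ∩ A := by
        rw [Set.inter_assoc, Set.inter_eq_self_of_subset_right hAc]
      calc GenPolygon.delta n G (X ∩ A) = GenPolygon.delta n G ((X ∩ c i) ∩ A) := by rw [h1]
        _ ≤ GenPolygon.delta n G (X ∩ c i) :=
            hstr _ Set.inter_subset_right (hXfin.inter_of_left _)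
        _ ≤ GenPolygon.delta n G X := hstr' X hX hXfin
  obtain ⟨hfin, hsub, hstr, hdel⟩ := key m le_rfl
  rw [hm] at hsub hstr hdel
  exact ⟨⟨hsub, hstr⟩, hdel⟩
end
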